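/- A shifted simplicial complex is flag if and only if it is the clique complex of a threshold graph. -/

import Mathlib

open Finset

/-- Number of cliques of `G` with exactly `i` vertices. -/
noncomputable def cliqueCount {V : Type*} (G : SimpleGraph V) (i : ℕ) : ℕ :=
  {s : Finset V | G.IsNClique i s}.ncard

/-- Clique number: the largest cardinality of a clique of `G`. -/
noncomputable def cliqueNum {V : Type*} (G : SimpleGraph V) : ℕ :=
  sSup {i : ℕ | ∃ s : Finset V, G.IsNClique i s}

/-- `G` is `k`-connected: it has at least `k` vertices and removing any set of
fewer than `k` vertices leaves a connected graph. -/
def KConnected {V : Type*} [Fintype V] (G : SimpleGraph V) (k : ℕ) : Prop :=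
  k ≤ Fintype.card V ∧
    ∀ s : Finset V, s.card < k → (G.induce ((↑s : Set V)ᶜ)).Connected

/-- The connectivity number `κ(G)`: the largest `k` such that `G` is `k`-connected. -/
noncomputable def connectivityNum {V : Type*} [Fintype V] (G : SimpleGraph V) : ℕ :=
  sSup {k : ℕ | KConnected G k}

/-- A graph is chordal if every cycle of length at least four has a chord. -/
def IsChordal {V : Type*} (G : SimpleGraph V) : Prop :=
  ∀ (v : V) (c : G.Walk v v), c.IsCycle → 4 ≤ c.length →
    ∃ u w, u ∈ c.support ∧ w ∈ c.support ∧ G.Adj u w ∧ s(u, w) ∉ c.edges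

/-- The threshold graph built from a word in the alphabet `{S, D}` (here
`true` = `S`, `false` = `D`), where the leftmost letter is the last operation
performed.  Vertex `i` corresponds to the `i`-th letter; two vertices are
adjacent iff the earlier (smaller-index, i.e. later-added) one is a dominating
vertex. -/
def thresholdGraph (w : List Bool) : SimpleGraph (Fin w.length) where
  Adj i j := i ≠ j ∧ w.get (min i j) = true
  symm := ⟨fun i j h => ⟨h.1.symm, by rw [min_comm]; exact h.2⟩⟩
  loopless := ⟨fun i h => h.1 rfl⟩

/-- A valid threshold word: the final (rightmost) letter, i.e. the first
operation performed, is `S`. -/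
def IsThresholdWord (w : List Bool) : Prop := w ≠ [] → w.getLast? = some true

/-- A graph is a threshold graph if it is isomorphic to the graph of some
threshold word. -/
def IsThresholdGraph {V : Type*} (G : SimpleGraph V) : Prop :=
  ∃ w : List Bool, IsThresholdWord w ∧ Nonempty (G ≃g thresholdGraph w)

/-- An abstract simplicial complex on vertex set `V`. -/
structure AbsCx (V : Type*) where
  faces : Set (Finset V)
  down_closed : ∀ ⦃s t : Finset V⦄, s ∈ faces → t ⊆ s → t ∈ faces

/-- The clique complex of a graph: its faces are the cliques. -/
def cliqueComplex {V : Type*} (G : SimpleGraph V) : AbsCx V :=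
  ⟨{s | G.IsClique (↑s : Set V)}, fun s t hs hts => hs.subset (Finset.coe_subset.mpr hts)⟩

/-- The induced subcomplex on a vertex subset `W`. -/
def AbsCx.restrict {V : Type*} (K : AbsCx V) (W : Set V) : AbsCx V :=
  ⟨{s | s ∈ K.faces ∧ (↑s : Set V) ⊆ W},
   fun s t hs hts =>
     ⟨K.down_closed hs.1 hts, le_trans (Finset.coe_subset.mpr hts) hs.2⟩⟩

/-- A complex is flag if every minimal non-face has exactly two elements. -/
def AbsCx.IsFlag {V : Type*} (K : AbsCx V) : Prop :=
  ∀ s : Finset V, s ∉ K.faces → (∀ t ⊂ s, t ∈ K.faces) → s.card = 2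

/-- A complex on `Fin n` is shifted if exchanging a vertex of a face by a
smaller vertex not in the face again yields a face. -/
def AbsCx.IsShifted {n : ℕ} (K : AbsCx (Fin n)) : Prop :=
  ∀ s ∈ K.faces, ∀ i ∈ s, ∀ j, j ∉ s → j < i → insert j (s.erase i) ∈ K.faces

/-- Faces of (integer) dimension `d`, i.e. of cardinality `d + 1`. -/
def AbsCx.dimFaces {V : Type*} (K : AbsCx V) (d : ℤ) : Type _ :=
  {s : Finset V // s ∈ K.faces ∧ (s.card : ℤ) = d + 1}

/-- The simplicial (augmented) boundary map of a complex, on `d`-dimensional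
chains with coefficients in `𝕜`. -/
noncomputable def chainBoundary {V : Type*} [LinearOrder V] (K : AbsCx V)
    (𝕜 : Type*) [Field 𝕜] (d : ℤ) :
    (K.dimFaces d →₀ 𝕜) →ₗ[𝕜] (K.dimFaces (d - 1) →₀ 𝕜) :=
  Finsupp.lsum 𝕜 fun F =>
    LinearMap.toSpanSingleton 𝕜 _
      (∑ v ∈ F.1.attach,
        ((-1 : 𝕜) ^ (F.1.filter (fun x => x < v.1)).card) •
          Finsupp.single
            (⟨F.1.erase v.1,
              K.down_closed F.2.1 (Finset.erase_subset _ _),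
              by
                obtain ⟨hf, hc⟩ := F.2
                have h1 : 1 ≤ F.1.card := Finset.card_pos.mpr ⟨v.1, v.2⟩
                rw [Finset.card_erase_of_mem v.2, Nat.cast_sub h1]
                omega⟩ : K.dimFaces (d - 1))
            (1 : 𝕜))

/-- The dimension of the `d`-th reduced simplicial homology of `K` with
coefficients in `𝕜` (computed as `dim ker ∂_d − dim im ∂_{d+1}`). -/
noncomputable def AbsCx.homDim {V : Type*} [LinearOrder V] (𝕜 : Type*) [Field 𝕜]
    (K : AbsCx V) (d : ℤ) : ℕ :=
  Module.finrank 𝕜 (LinearMap.ker (chainBoundary K 𝕜 d)) -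
    Module.finrank 𝕜 (LinearMap.range (chainBoundary K 𝕜 (d + 1)))

/-- The graded Betti numbers `β_{i,j}` of the Stanley–Reisner ring `𝕜[K]`,
given by Hochster's formula: `β_{i,j} = Σ_{|W| = j} dim_𝕜 H̃_{j-i-1}(K_W)`. -/
noncomputable def srBetti (𝕜 : Type*) [Field 𝕜] {n : ℕ} (K : AbsCx (Fin n))
    (i j : ℕ) : ℕ :=
  ∑ W ∈ Finset.powersetCard j (Finset.univ : Finset (Fin n)),
    AbsCx.homDim 𝕜 (K.restrict (↑W : Set (Fin n))) ((j : ℤ) - i - 1)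

/-- The projective dimension of the Stanley–Reisner ring `𝕜[K]` over the
polynomial ring: the largest homological degree with a nonzero Betti number. -/
noncomputable def srProjDim (𝕜 : Type*) [Field 𝕜] {n : ℕ} (K : AbsCx (Fin n)) : ℕ :=
  sSup {i : ℕ | ∃ j : ℕ, srBetti 𝕜 K i j ≠ 0}

/-- The depth of the Stanley–Reisner ring `𝕜[K]`, via the
Auslander–Buchsbaum formula `depth = n − projdim`. -/
noncomputable def srDepth (𝕜 : Type*) [Field 𝕜] {n : ℕ} (K : AbsCx (Fin n)) : ℕ :=
  n - srProjDim 𝕜 K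

/-- The lengths of the blocks obtained by splitting a threshold word
immediately after each `S` (= `true`); the `b`-vector of the word. -/
def blocks : List Bool → List ℕ
  | [] => []
  | true :: rest => 1 :: blocks rest
  | false :: rest =>
    match blocks rest with
    | [] => []
    | b :: bs => (b + 1) :: bs

/-- One plus the dimension of a complex: the largest cardinality of a face. -/
noncomputable def AbsCx.dimPlusOne {V : Type*} (K : AbsCx V) : ℕ :=
  sSup {c : ℕ | ∃ s ∈ K.faces, s.card = c}

/-- `K` is Cohen–Macaulay over `𝕜` iff the depth of `𝕜[K]` equals its Krull
dimension `dim K + 1`. -/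
def IsCohenMacaulay (𝕜 : Type*) [Field 𝕜] {n : ℕ} (K : AbsCx (Fin n)) : Prop :=
  srDepth 𝕜 K = K.dimPlusOne

/-- The Alexander dual complex. -/
def AbsCx.dual {n : ℕ} (K : AbsCx (Fin n)) : AbsCx (Fin n) :=
  ⟨{s | Finset.univ \ s ∉ K.faces},
   fun s t hs hts h => hs (K.down_closed h (Finset.sdiff_subset_sdiff (le_refl _) hts))⟩

/-- The number of faces of `K` with exactly `i` vertices (the `f`-vector). -/
noncomputable def AbsCx.faceCount {V : Type*} (K : AbsCx V) (i : ℕ) : ℕ :=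
  {s ∈ K.faces | s.card = i}.ncard

/-!
A flag complex is the clique complex of its 1-skeleton, and the 1-skeleton of a shifted
complex is a shifted graph: neighbourhoods are closed under passing to smaller vertices.
In a shifted graph on `Fin (n + 1)` either vertex `0` dominates or the last vertex is
isolated (a neighbour of the last vertex shifts to `0`, and then `0` is adjacent to the last
vertex and hence to everything). Deleting that vertex leaves a shifted graph, and recording
"dominating" or "isolated" at each step spells out a threshold word. Conversely, every
clique complex is flag.
-/

lemma AbsCx.ext {V : Type*} {K L : AbsCx V} (h : K.faces = L.faces) : K = L := by
  cases K; cases L; cases h; rfl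

def AbsCx.oneSkeleton {V : Type*} [DecidableEq V] (K : AbsCx V) : SimpleGraph V where
  Adj a b := a ≠ b ∧ ({a, b} : Finset V) ∈ K.faces
  symm := ⟨fun a b h => ⟨h.1.symm, by rw [Finset.pair_comm]; exact h.2⟩⟩
  loopless := ⟨fun _ h => h.1 rfl⟩

lemma AbsCx.isClique_oneSkeleton {V : Type*} [DecidableEq V] (K : AbsCx V) {s : Finset V}
    (hs : s ∈ K.faces) : K.oneSkeleton.IsClique (↑s : Set V) :=
  fun a ha b hb hab => ⟨hab, K.down_closed hs (Finset.insert_subset ha (by simpa using hb))⟩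

lemma AbsCx.IsFlag.mem_faces_of_isClique {V : Type*} [DecidableEq V] {K : AbsCx V}
    (hK : K.IsFlag) (s : Finset V) (hs : K.oneSkeleton.IsClique (↑s : Set V)) :
    s ∈ K.faces := by
  induction s using Finset.strongInduction with
  | H s ih =>
    by_contra hns
    have hcard := hK s hns fun t ht => ih t ht (hs.subset (Finset.coe_subset.mpr ht.subset))
    obtain ⟨a, b, hab, rfl⟩ := Finset.card_eq_two.mp hcard
    exact hns (hs (by simp) (by simp) hab).2

lemma AbsCx.IsFlag.eq_cliqueComplex {V : Type*} [DecidableEq V] {K : AbsCx V}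
    (hK : K.IsFlag) : K = cliqueComplex K.oneSkeleton :=
  AbsCx.ext <| Set.ext fun s => ⟨K.isClique_oneSkeleton, hK.mem_faces_of_isClique s⟩

lemma cliqueComplex_isFlag {V : Type*} (G : SimpleGraph V) : (cliqueComplex G).IsFlag := by
  classical
  intro s hns hmin
  obtain ⟨a, ha, b, hb, hab, hnadj⟩ : ∃ a ∈ s, ∃ b ∈ s, a ≠ b ∧ ¬ G.Adj a b := by
    simpa [cliqueComplex, SimpleGraph.isClique_iff, Set.Pairwise] using hns
  have hsub : ({a, b} : Finset V) ⊆ s := Finset.insert_subset ha (by simpa using hb)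
  obtain heq | hssub := hsub.eq_or_ssubset
  · rw [← heq, Finset.card_pair hab]
  · exact absurd ((hmin _ hssub) (by simp) (by simp) hab) hnadj

def SimpleGraph.IsShifted {α : Type*} [Preorder α] (G : SimpleGraph α) : Prop :=
  ∀ ⦃i j k : α⦄, G.Adj i j → k < j → k ≠ i → G.Adj i k

lemma SimpleGraph.IsShifted.comap {α β : Type*} [Preorder α] [LinearOrder β]
    {G : SimpleGraph α} (hG : G.IsShifted) {f : β → α} (hf : StrictMono f) :
    (G.comap f).IsShifted :=
  fun _ _ _ hij hkj hki => hG hij (hf hkj) (hf.injective.ne hki)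

lemma AbsCx.IsShifted.oneSkeleton {n : ℕ} {K : AbsCx (Fin n)} (hK : K.IsShifted) :
    K.oneSkeleton.IsShifted := by
  intro i j k hij hkj hki
  have hkij : k ∉ ({i, j} : Finset (Fin n)) := by simp [hki, hkj.ne]
  have h := hK _ hij.2 j (by simp) k hkij hkj
  rw [Finset.pair_comm, Finset.erase_insert (by simpa using hij.1.symm)] at h
  exact ⟨hki.symm, by rwa [Finset.pair_comm]⟩

lemma SimpleGraph.IsShifted.adj_zero {n : ℕ} {G : SimpleGraph (Fin (n + 1))}
    (hG : G.IsShifted) {i j : Fin (n + 1)} (hi : G.Adj i (Fin.last n)) (hj : j ≠ 0) :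
    G.Adj 0 j := by
  have hn : n ≠ 0 := by
    rintro rfl
    exact hi.ne (Subsingleton.elim (α := Fin 1) _ _)
  have h0 : G.Adj 0 (Fin.last n) := by
    obtain rfl | hi0 := eq_or_ne i 0
    · exact hi
    · exact (hG hi.symm (Fin.pos_of_ne_zero hi0) (by simp [Fin.ext_iff, Ne.symm hn])).symm
  obtain rfl | hjl := eq_or_ne j (Fin.last n)
  · exact h0
  · exact hG h0 (Fin.lt_last_iff_ne_last.mpr hjl) hj

lemma thresholdGraph_cons_adj_zero_succ (b : Bool) (w : List Bool) (j : Fin w.length) :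
    (thresholdGraph (b :: w)).Adj 0 j.succ ↔ b = true := by
  simp [thresholdGraph, (Fin.succ_ne_zero j).symm]

lemma thresholdGraph_cons_adj_succ_succ (b : Bool) (w : List Bool) (i j : Fin w.length) :
    (thresholdGraph (b :: w)).Adj i.succ j.succ ↔ (thresholdGraph w).Adj i j := by
  simp [thresholdGraph]

lemma thresholdGraph_cons_iso {m : ℕ} {G : SimpleGraph (Fin (m + 1))} {w : List Bool}
    (p : Fin (m + 1)) (b : Bool) (hp : ∀ j, j ≠ p → (G.Adj p j ↔ b = true))
    (φ : G.comap p.succAbove ≃g thresholdGraph w) :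
    Nonempty (G ≃g thresholdGraph (b :: w)) := by
  let e : Fin (m + 1) ≃ Fin (b :: w).length :=
    (finSuccEquiv' p).trans (φ.toEquiv.optionCongr.trans (finSuccEquiv w.length).symm)
  have he_p : e p = 0 := by simp [e]
  have he_succAbove (i : Fin m) : e (p.succAbove i) = (φ i).succ := by simp [e]
  refine ⟨⟨e, fun {x y} => ?_⟩⟩
  induction x using p.succAboveCases with
  | x =>
    induction y using p.succAboveCases with
    | x => simp only [he_p, SimpleGraph.irrefl]
    | p j =>
      rw [he_p, he_succAbove, thresholdGraph_cons_adj_zero_succ, hp _ (p.succAbove_ne j)]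
  | p i =>
    induction y using p.succAboveCases with
    | x =>
      rw [he_p, he_succAbove, SimpleGraph.adj_comm, thresholdGraph_cons_adj_zero_succ,
        G.adj_comm, hp _ (p.succAbove_ne i)]
    | p j =>
      rw [he_succAbove, he_succAbove, thresholdGraph_cons_adj_succ_succ, φ.map_adj_iff,
        SimpleGraph.comap_adj]

lemma isThresholdWord_cons {w : List Bool} (hw : IsThresholdWord w) {b : Bool}
    (hb : w = [] → b = true) : IsThresholdWord (b :: w) := fun _ => by
  cases w with
  | nil => simp [hb rfl]
  | cons c t => exact (List.getLast?_cons_cons).trans (hw (List.cons_ne_nil c t))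

theorem SimpleGraph.IsShifted.isThresholdGraph :
    ∀ {n : ℕ} {G : SimpleGraph (Fin n)}, G.IsShifted → IsThresholdGraph G
  | 0, G, _ => ⟨[], fun h => absurd rfl h, ⟨⟨Equiv.refl _, fun {a} => a.elim0⟩⟩⟩
  | n + 1, G, hG => by
    by_cases hdom : ∀ j, j ≠ 0 → G.Adj 0 j
    · obtain ⟨w, hw, ⟨φ⟩⟩ := (hG.comap (Fin.strictMono_succAbove 0)).isThresholdGraph
      refine ⟨true :: w, isThresholdWord_cons hw fun _ => rfl,
        thresholdGraph_cons_iso 0 true (fun j hj => iff_of_true (hdom j hj) rfl) φ⟩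
    · have hn : n ≠ 0 := by
        rintro rfl
        exact hdom fun j hj => absurd (Fin.fin_one_eq_zero j) hj
      have hisol (i : Fin (n + 1)) : ¬ G.Adj (Fin.last n) i := fun hi =>
        hdom fun _ hj => hG.adj_zero hi.symm hj
      obtain ⟨w, hw, ⟨φ⟩⟩ :=
        (hG.comap (Fin.strictMono_succAbove (Fin.last n))).isThresholdGraph
      refine ⟨false :: w, isThresholdWord_cons hw fun hnil => ?_,
        thresholdGraph_cons_iso _ false (fun i _ => iff_of_false (hisol i) (by simp)) φ⟩
      exact absurd (by simpa [hnil] using Fintype.card_congr φ.toEquiv) hn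

/-- a shifted complex is flag iff it is the clique complex of a
threshold graph. -/
theorem shifted_flag_iff_threshold {n : ℕ} (Γ : AbsCx (Fin n))
    (hsh : Γ.IsShifted) :
    Γ.IsFlag ↔
      ∃ G : SimpleGraph (Fin n), IsThresholdGraph G ∧ Γ = cliqueComplex G := by
  constructor
  · intro hflag
    exact ⟨Γ.oneSkeleton, hsh.oneSkeleton.isThresholdGraph, hflag.eq_cliqueComplex⟩
  · rintro ⟨G, -, rfl⟩
    exact cliqueComplex_isFlag G
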